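/- arXiv:1807.11931 — 4 statements merged into one kernel-verified Lean document; each statement's English description precedes it below -/
import Mathlib

section
/- Let I_{1,k+1} denote the odd unimodular lattice with orthogonal basis h, e₁, …, e_{k+1} where h² = 1 and eᵢ² = −1, and view I_{1,k} as the sublattice spanned by h, e₁, …, e_k. Suppose v ∈ I_{1,k} has v·v = 1 and its orthogonal complement in I_{1,k} is Λ. Then the orthogonal complement of 2v − e_{k+1} in I_{1,k+1} is isomorphic (as a lattice) to Λ ⊕ ⟨−3⟩. -/
open BigOperators Matrix

/-!
Write `e = e_{k+1}`, `W = (2v - e)^⊥` and `u = v - 2e`. Then `v·u = 1`, and on `W` the last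
coordinate is `-2 (v·x)`, so `x·u = -3 (v·x)`; in particular `u ∈ W` and `u·u = -3`. Hence
`x ↦ (x - (v·x) u, v·x)` splits `W` orthogonally as `(W ∩ v^⊥) ⊕ ℤu`, and `W ∩ v^⊥` is exactly
`Λ` (vectors orthogonal to `v` with vanishing last coordinate).
-/

/-- Gram matrix of the odd unimodular lattice `I_{1,n-1}`: diagonal `(1, -1, …, -1)`. -/
def hypMat (n : ℕ) : Matrix (Fin n) (Fin n) ℤ :=
  Matrix.diagonal fun i => if (i : ℕ) = 0 then 1 else -1

/-- The bilinear form of `I_{1,n-1}` on `Fin n → ℤ`. -/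
def bilin (n : ℕ) (x y : Fin n → ℤ) : ℤ :=
  x ⬝ᵥ (hypMat n).mulVec y

/-- The orthogonal complement of `v` in `I_{1,n-1}`. -/
def perp (n : ℕ) (v : Fin n → ℤ) : Submodule ℤ (Fin n → ℤ) where
  carrier := {x | bilin n v x = 0}
  add_mem' := by
    intro a b ha hb
    simp only [Set.mem_setOf_eq, bilin, Matrix.mulVec_add, dotProduct_add] at *
    omega
  zero_mem' := by simp [bilin]
  smul_mem' := by
    intro c x hx
    simp only [Set.mem_setOf_eq, bilin] at *
    rw [Matrix.mulVec_smul, dotProduct_smul, hx, smul_zero]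

namespace Submodule

variable {R M : Type*} [CommRing R] [AddCommGroup M] [Module R M]

def equivInfKerProd (W : Submodule R M) (φ : M →ₗ[R] R) {u : M} (hu : u ∈ W)
    (hφu : φ u = 1) : W ≃ₗ[R] ↥(W ⊓ LinearMap.ker φ) × R where
  toFun x := (⟨x - φ x • u, W.sub_mem x.2 (W.smul_mem _ hu), by simp [hφu]⟩, φ x)
  invFun p := ⟨p.1 + p.2 • u, W.add_mem (mem_inf.1 p.1.2).1 (W.smul_mem _ hu)⟩
  map_add' x y := by ext <;> simp [add_smul, sub_add_sub_comm]
  map_smul' c x := by ext <;> simp [mul_smul, smul_sub]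
  left_inv x := by ext; simp
  right_inv p := by
    have hp : φ p.1 = 0 := (mem_inf.1 p.1.2).2
    ext <;> simp [hp, hφu]

@[simp]
lemma coe_equivInfKerProd_fst (W : Submodule R M) (φ : M →ₗ[R] R) {u : M} (hu : u ∈ W)
    (hφu : φ u = 1) (x : W) :
    ((equivInfKerProd W φ hu hφu x).1 : M) = x - φ x • u := rfl

@[simp]
lemma equivInfKerProd_snd (W : Submodule R M) (φ : M →ₗ[R] R) {u : M} (hu : u ∈ W)
    (hφu : φ u = 1) (x : W) : (equivInfKerProd W φ hu hφu x).2 = φ x := rfl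

end Submodule

namespace LinearMap.BilinForm

variable {R M : Type*} [CommRing R] [AddCommGroup M] [Module R M]

lemma apply_sub_smul_sub_smul (B : LinearMap.BilinForm R M) {u x y : M} {a b : R}
    (hx : B x u = B u u * a) (hy : B u y = B u u * b) :
    B (x - a • u) (y - b • u) = B x y - B u u * (a * b) := by
  simp only [map_sub, map_smul, LinearMap.sub_apply, LinearMap.smul_apply, smul_eq_mul, hx, hy]
  ring

lemma apply_equivInfKerProd (B : LinearMap.BilinForm R M) {W : Submodule R M}
    {φ : M →ₗ[R] R} {u : M} (hu : u ∈ W) (hφu : φ u = 1)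
    (hB : ∀ x ∈ W, B x u = B u u * φ x ∧ B u x = B u u * φ x) (x y : W) :
    let f := W.equivInfKerProd φ hu hφu
    B x y = B (f x).1 (f y).1 + B u u * ((f x).2 * (f y).2) := by
  simp only [Submodule.coe_equivInfKerProd_fst, Submodule.equivInfKerProd_snd]
  rw [apply_sub_smul_sub_smul B (hB x x.2).1 (hB y y.2).2]
  ring

end LinearMap.BilinForm

def hypForm (n : ℕ) : LinearMap.BilinForm ℤ (Fin n → ℤ) := Matrix.toBilin' (hypMat n)

lemma hypForm_apply (n : ℕ) (x y : Fin n → ℤ) : hypForm n x y = bilin n x y :=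
  Matrix.toBilin'_apply' _ _ _

lemma hypForm_isSymm (n : ℕ) : (hypForm n).IsSymm :=
  Matrix.isSymm_toBilin'_iff_isSymm.2 (Matrix.isSymm_diagonal _)

lemma hypForm_single_last (k : ℕ) (x : Fin (k + 2) → ℤ) :
    hypForm (k + 2) x (Pi.single (Fin.last (k + 1)) 1) = -x (Fin.last (k + 1)) := by
  simp [hypForm, Matrix.toBilin'_apply', hypMat, Matrix.mulVec_single, Fin.last]

/-- View `I_{1,k}` inside `I_{1,k+1}` as the vectors vanishing on the
last coordinate `e_{k+1}`. If `v ∈ I_{1,k}` has `v·v = 1` with orthogonal complement `Λ`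
in `I_{1,k}`, then the orthogonal complement of `2v − e_{k+1}` in `I_{1,k+1}` is
isomorphic, as a lattice, to `Λ ⊕ ⟨−3⟩`. -/
theorem stmt6 (k : ℕ) (v : Fin (k + 2) → ℤ) (hv0 : v (Fin.last (k + 1)) = 0)
    (hvv : bilin (k + 2) v v = 1)
    (Λ : Submodule ℤ (Fin (k + 2) → ℤ))
    (hΛ : Λ = perp (k + 2) v ⊓
      LinearMap.ker (LinearMap.proj (R := ℤ) (φ := fun _ : Fin (k + 2) => ℤ)
        (Fin.last (k + 1)))) :
    ∃ f : (perp (k + 2) (2 • v - Pi.single (Fin.last (k + 1)) 1)) ≃ₗ[ℤ] (Λ × ℤ),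
      ∀ x y : (perp (k + 2) (2 • v - Pi.single (Fin.last (k + 1)) 1)),
        bilin (k + 2) (x : Fin (k + 2) → ℤ) (y : Fin (k + 2) → ℤ)
          = bilin (k + 2) ((f x).1 : Fin (k + 2) → ℤ) ((f y).1 : Fin (k + 2) → ℤ)
            + (-3) * ((f x).2 * (f y).2) := by
  set B := hypForm (k + 2)
  set e : Fin (k + 2) → ℤ := Pi.single (Fin.last (k + 1)) 1
  set W := perp (k + 2) (2 • v - e)
  set u := v - 2 • e
  have hB : B.IsSymm := hypForm_isSymm (k + 2)
  have hBe (x) : B x e = -x (Fin.last (k + 1)) := hypForm_single_last k x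
  have hvv' : B v v = 1 := (hypForm_apply _ v v).trans hvv
  have hmem_perp (w x) : x ∈ perp (k + 2) w ↔ B w x = 0 := by rw [hypForm_apply]; rfl
  have hmemW (x) : x ∈ W ↔ 2 * B v x + x (Fin.last (k + 1)) = 0 := by
    rw [hmem_perp, map_sub, map_nsmul, LinearMap.sub_apply, LinearMap.smul_apply, hB.eq e,
      hBe, nsmul_eq_mul, Nat.cast_ofNat, sub_neg_eq_add]
  have hvu : B v u = 1 := by
    rw [map_sub, map_nsmul, hBe, hv0, hvv']
    simp
  have hu_last : u (Fin.last (k + 1)) = -2 := by simp [u, e, hv0]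
  have hu : u ∈ W := by rw [hmemW, hvu, hu_last]; rfl
  have hBu (x) (hx : x ∈ W) : B x u = -3 * B v x := by
    rw [hmemW] at hx
    rw [map_sub, map_nsmul, hBe, hB.eq x v]
    simp only [nsmul_eq_mul]
    omega
  have huu : B u u = -3 := by rw [hBu u hu, hvu]; ring
  have hΛ' : Λ = W ⊓ LinearMap.ker (B v) := by
    ext x
    rw [hΛ, Submodule.mem_inf, Submodule.mem_inf, hmem_perp, hmemW, LinearMap.mem_ker,
      LinearMap.mem_ker, LinearMap.proj_apply]
    omega
  subst hΛ'
  refine ⟨W.equivInfKerProd (B v) hu hvu, fun x y => ?_⟩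
  have := B.apply_equivInfKerProd hu hvu (fun x hx => ?_) x y
  · simpa only [B, hypForm_apply, huu] using this
  · rw [hBu x hx, hB.eq u x, hBu x hx, huu]
    exact ⟨rfl, rfl⟩
end

section
/- Let I_{1,k+2} denote the odd unimodular lattice with orthogonal basis h, e₁, …, e_{k+2} where h² = 1 and eᵢ² = −1, and view I_{1,k} as the sublattice spanned by h, e₁, …, e_k. Suppose v ∈ I_{1,k} has v·v = 1 and its orthogonal complement in I_{1,k} is Λ. Then the orthogonal complement of 2v − e_{k+1} − e_{k+2} in I_{1,k+2} is isomorphic to Λ ⊕ ⟨−2⟩ ⊕ ⟨−1⟩. -/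
open BigOperators Matrix

section DualPair

variable {R M : Type*} [CommRing R] [AddCommGroup M] [Module R M]
  {P Λ : Submodule R M} {u₁ u₂ : M} {α β : M →ₗ[R] R}

def equivProdOfDualPair (hu₁ : u₁ ∈ P) (hu₂ : u₂ ∈ P) (hα₁ : α u₁ = 1) (hα₂ : α u₂ = 0)
    (hβ₁ : β u₁ = 0) (hβ₂ : β u₂ = 1) (hΛ : ∀ x, x ∈ Λ ↔ x ∈ P ∧ α x = 0 ∧ β x = 0) :
    P ≃ₗ[R] Λ × R × R where
  toFun x := (⟨x - α x • u₁ - β x • u₂, (hΛ _).2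
      ⟨P.sub_mem (P.sub_mem x.2 (P.smul_mem _ hu₁)) (P.smul_mem _ hu₂),
        by simp [hα₁, hα₂], by simp [hβ₁, hβ₂]⟩⟩, α x, β x)
  invFun p := ⟨p.1 + p.2.1 • u₁ + p.2.2 • u₂,
    P.add_mem (P.add_mem ((hΛ _).1 p.1.2).1 (P.smul_mem _ hu₁)) (P.smul_mem _ hu₂)⟩
  map_add' x y := Prod.ext (Subtype.ext <| by
      simp only [Prod.fst_add, Submodule.coe_add, map_add, add_smul]; abel) (by simp)
  map_smul' c x := Prod.ext (Subtype.ext <| by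
      simp only [Prod.smul_fst, Submodule.coe_smul, map_smul, RingHom.id_apply, smul_eq_mul,
        mul_smul, smul_sub]) (by simp)
  left_inv x := Subtype.ext <| by dsimp only; abel
  right_inv p := by
    obtain ⟨-, hα, hβ⟩ := (hΛ _).1 p.1.2
    refine Prod.ext (Subtype.ext ?_) (by simp [hα, hβ, hα₁, hα₂, hβ₁, hβ₂])
    simp only [map_add, map_smul, hα, hβ, hα₁, hα₂, hβ₁, hβ₂, smul_eq_mul, mul_one, mul_zero,
      zero_add, add_zero]
    abel

theorem LinearMap.BilinForm.IsSymm.apply_add_smul_add_smul {B : LinearMap.BilinForm R M}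
    (hB : B.IsSymm) {l l' : M} (hl₁ : B l u₁ = 0) (hl₂ : B l u₂ = 0) (hl'₁ : B l' u₁ = 0)
    (hl'₂ : B l' u₂ = 0) (h₁₂ : B u₁ u₂ = 0) (a b a' b' : R) :
    B (l + a • u₁ + b • u₂) (l' + a' • u₁ + b' • u₂)
      = B l l' + B u₁ u₁ * (a * a') + B u₂ u₂ * (b * b') := by
  simp only [map_add, map_smul, LinearMap.add_apply, LinearMap.smul_apply, smul_eq_mul,
    hl₁, hl₂, hB.eq u₁ l', hB.eq u₂ l', hl'₁, hl'₂, hB.eq u₂ u₁, h₁₂]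
  ring

theorem equivProdOfDualPair_bilinForm (hu₁ : u₁ ∈ P) (hu₂ : u₂ ∈ P) (hα₁ : α u₁ = 1)
    (hα₂ : α u₂ = 0) (hβ₁ : β u₁ = 0) (hβ₂ : β u₂ = 1)
    (hΛ : ∀ x, x ∈ Λ ↔ x ∈ P ∧ α x = 0 ∧ β x = 0) {B : LinearMap.BilinForm R M} (hB : B.IsSymm)
    (hΛ₁ : ∀ l ∈ Λ, B l u₁ = 0) (hΛ₂ : ∀ l ∈ Λ, B l u₂ = 0) (h₁₂ : B u₁ u₂ = 0) (x y : P) :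
    let e := equivProdOfDualPair hu₁ hu₂ hα₁ hα₂ hβ₁ hβ₂ hΛ
    B x y = B (e x).1 (e y).1 + B u₁ u₁ * ((e x).2.1 * (e y).2.1)
      + B u₂ u₂ * ((e x).2.2 * (e y).2.2) := by
  intro e
  calc B x y = B (e.symm (e x)) (e.symm (e y)) := by simp only [LinearEquiv.symm_apply_apply]
    _ = _ := hB.apply_add_smul_add_smul (hΛ₁ _ (e x).1.2) (hΛ₂ _ (e x).1.2) (hΛ₁ _ (e y).1.2)
        (hΛ₂ _ (e y).1.2) h₁₂ _ _ _ _

end DualPair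

def lorentzForm (n : ℕ) : LinearMap.BilinForm ℤ (Fin n → ℤ) := Matrix.toBilin' (hypMat n)

section LorentzForm

variable {n : ℕ}

theorem lorentzForm_apply (x y : Fin n → ℤ) : lorentzForm n x y = bilin n x y :=
  Matrix.toBilin'_apply' _ _ _

theorem isSymm_lorentzForm : (lorentzForm n).IsSymm :=
  Matrix.isSymm_toBilin'_iff_isSymm.2 (Matrix.isSymm_diagonal _)

@[simp]
theorem lorentzForm_single_right (x : Fin n → ℤ) {j : Fin n} (hj : (j : ℕ) ≠ 0) :
    lorentzForm n x (Pi.single j 1) = -x j := by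
  simp [lorentzForm, Matrix.toBilin'_apply', hypMat, hj]

@[simp]
theorem lorentzForm_single_left (x : Fin n → ℤ) {j : Fin n} (hj : (j : ℕ) ≠ 0) :
    lorentzForm n (Pi.single j 1) x = -x j := by
  rw [isSymm_lorentzForm.eq, lorentzForm_single_right x hj]

theorem mem_perp_iff {v x : Fin n → ℤ} : x ∈ perp n v ↔ lorentzForm n v x = 0 := by
  rw [lorentzForm_apply]; rfl

end LorentzForm

section Reflection

variable {n : ℕ} {i₁ i₂ : Fin n} {v : Fin n → ℤ}

theorem lorentzForm_two_smul_sub_single_sub_single (h₁ : (i₁ : ℕ) ≠ 0) (h₂ : (i₂ : ℕ) ≠ 0)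
    (x : Fin n → ℤ) :
    lorentzForm n (2 • v - Pi.single i₁ 1 - Pi.single i₂ 1) x
      = 2 * lorentzForm n v x + x i₁ + x i₂ := by
  simp [two_smul, two_mul, h₁, h₂]

theorem single_sub_single_mem_perp (h₁ : (i₁ : ℕ) ≠ 0) (h₂ : (i₂ : ℕ) ≠ 0) (h₁₂ : i₁ ≠ i₂)
    (hv₁ : v i₁ = 0) (hv₂ : v i₂ = 0) :
    Pi.single i₁ 1 - Pi.single i₂ 1 ∈ perp n (2 • v - Pi.single i₁ 1 - Pi.single i₂ 1) := by
  rw [mem_perp_iff, lorentzForm_two_smul_sub_single_sub_single h₁ h₂]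
  simp [h₁, h₂, h₁₂, h₁₂.symm, hv₁, hv₂]

theorem sub_single_sub_single_mem_perp (h₁ : (i₁ : ℕ) ≠ 0) (h₂ : (i₂ : ℕ) ≠ 0) (h₁₂ : i₁ ≠ i₂)
    (hv₁ : v i₁ = 0) (hv₂ : v i₂ = 0) (hvv : lorentzForm n v v = 1) :
    v - Pi.single i₁ 1 - Pi.single i₂ 1 ∈ perp n (2 • v - Pi.single i₁ 1 - Pi.single i₂ 1) := by
  rw [mem_perp_iff, lorentzForm_two_smul_sub_single_sub_single h₁ h₂]
  simp [h₁, h₂, h₁₂, h₁₂.symm, hv₁, hv₂, hvv]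

theorem mem_perp_inf_ker_proj_iff (h₁ : (i₁ : ℕ) ≠ 0) (h₂ : (i₂ : ℕ) ≠ 0) (x : Fin n → ℤ) :
    x ∈ perp n v ⊓ LinearMap.ker (LinearMap.proj i₁) ⊓ LinearMap.ker (LinearMap.proj i₂) ↔
      x ∈ perp n (2 • v - Pi.single i₁ 1 - Pi.single i₂ 1) ∧
        (LinearMap.proj i₁ + lorentzForm n v : (Fin n → ℤ) →ₗ[ℤ] ℤ) x = 0 ∧
          lorentzForm n v x = 0 := by
  simp only [Submodule.mem_inf, LinearMap.mem_ker, LinearMap.proj_apply, mem_perp_iff,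
    lorentzForm_two_smul_sub_single_sub_single h₁ h₂, LinearMap.add_apply]
  omega

theorem lorentzForm_eq_zero_of_mem_perp_inf_ker_proj (h₁ : (i₁ : ℕ) ≠ 0) (h₂ : (i₂ : ℕ) ≠ 0)
    {l : Fin n → ℤ}
    (hl : l ∈ perp n v ⊓ LinearMap.ker (LinearMap.proj i₁) ⊓ LinearMap.ker (LinearMap.proj i₂)) :
    lorentzForm n l (Pi.single i₁ 1 - Pi.single i₂ 1) = 0 ∧
      lorentzForm n l (v - Pi.single i₁ 1 - Pi.single i₂ 1) = 0 := by
  simp only [Submodule.mem_inf, LinearMap.mem_ker, LinearMap.proj_apply, mem_perp_iff] at hl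
  obtain ⟨⟨hlv, hl₁⟩, hl₂⟩ := hl
  simp [h₁, h₂, hl₁, hl₂, isSymm_lorentzForm.eq l v, hlv]

theorem lorentzForm_single_sub_single_self (h₁ : (i₁ : ℕ) ≠ 0) (h₂ : (i₂ : ℕ) ≠ 0)
    (h₁₂ : i₁ ≠ i₂) :
    lorentzForm n (Pi.single i₁ 1 - Pi.single i₂ 1) (Pi.single i₁ 1 - Pi.single i₂ 1) = -2 := by
  simp [h₁, h₂, h₁₂, h₁₂.symm]

theorem lorentzForm_sub_single_sub_single_self (h₁ : (i₁ : ℕ) ≠ 0) (h₂ : (i₂ : ℕ) ≠ 0)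
    (h₁₂ : i₁ ≠ i₂) (hv₁ : v i₁ = 0) (hv₂ : v i₂ = 0) (hvv : lorentzForm n v v = 1) :
    lorentzForm n (v - Pi.single i₁ 1 - Pi.single i₂ 1) (v - Pi.single i₁ 1 - Pi.single i₂ 1)
      = -1 := by
  simp [h₁, h₂, h₁₂, h₁₂.symm, hv₁, hv₂, hvv]

theorem lorentzForm_single_sub_single_sub_single (h₁ : (i₁ : ℕ) ≠ 0) (h₂ : (i₂ : ℕ) ≠ 0)
    (h₁₂ : i₁ ≠ i₂) (hv₁ : v i₁ = 0) (hv₂ : v i₂ = 0) :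
    lorentzForm n (Pi.single i₁ 1 - Pi.single i₂ 1) (v - Pi.single i₁ 1 - Pi.single i₂ 1) = 0 := by
  simp [h₁, h₂, h₁₂, h₁₂.symm, hv₁, hv₂]

theorem exists_equiv_perp_two_smul_sub_single_sub_single (h₁ : (i₁ : ℕ) ≠ 0)
    (h₂ : (i₂ : ℕ) ≠ 0) (h₁₂ : i₁ ≠ i₂) (hv₁ : v i₁ = 0) (hv₂ : v i₂ = 0)
    (hvv : lorentzForm n v v = 1) :
    ∃ f : perp n (2 • v - Pi.single i₁ 1 - Pi.single i₂ 1) ≃ₗ[ℤ]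
        ↥(perp n v ⊓ LinearMap.ker (LinearMap.proj i₁) ⊓ LinearMap.ker (LinearMap.proj i₂))
          × ℤ × ℤ,
      ∀ x y : perp n (2 • v - Pi.single i₁ 1 - Pi.single i₂ 1),
        lorentzForm n x y = lorentzForm n (f x).1 (f y).1 + (-2) * ((f x).2.1 * (f y).2.1)
          + (-1) * ((f x).2.2 * (f y).2.2) := by
  have hu₁ := single_sub_single_mem_perp h₁ h₂ h₁₂ hv₁ hv₂
  have hu₂ := sub_single_sub_single_mem_perp h₁ h₂ h₁₂ hv₁ hv₂ hvv
  have hα₁ : (LinearMap.proj i₁ + lorentzForm n v : (Fin n → ℤ) →ₗ[ℤ] ℤ)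
      (Pi.single i₁ 1 - Pi.single i₂ 1) = 1 := by
    simp [h₁, h₂, h₁₂, hv₁, hv₂]
  have hα₂ : (LinearMap.proj i₁ + lorentzForm n v : (Fin n → ℤ) →ₗ[ℤ] ℤ)
      (v - Pi.single i₁ 1 - Pi.single i₂ 1) = 0 := by
    simp [h₁, h₂, h₁₂, hv₁, hv₂, hvv]
  have hβ₁ : lorentzForm n v (Pi.single i₁ 1 - Pi.single i₂ 1) = 0 := by simp [h₁, h₂, hv₁, hv₂]
  have hβ₂ : lorentzForm n v (v - Pi.single i₁ 1 - Pi.single i₂ 1) = 1 := by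
    simp [h₁, h₂, hv₁, hv₂, hvv]
  have hΛ := mem_perp_inf_ker_proj_iff (v := v) h₁ h₂
  refine ⟨equivProdOfDualPair hu₁ hu₂ hα₁ hα₂ hβ₁ hβ₂ hΛ, fun x y => ?_⟩
  have := equivProdOfDualPair_bilinForm hu₁ hu₂ hα₁ hα₂ hβ₁ hβ₂ hΛ isSymm_lorentzForm
    (fun l hl => (lorentzForm_eq_zero_of_mem_perp_inf_ker_proj h₁ h₂ hl).1)
    (fun l hl => (lorentzForm_eq_zero_of_mem_perp_inf_ker_proj h₁ h₂ hl).2)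
    (lorentzForm_single_sub_single_sub_single h₁ h₂ h₁₂ hv₁ hv₂) x y
  rwa [lorentzForm_single_sub_single_self h₁ h₂ h₁₂,
    lorentzForm_sub_single_sub_single_self h₁ h₂ h₁₂ hv₁ hv₂ hvv] at this

end Reflection

/-- View `I_{1,k}` inside `I_{1,k+2}` as the vectors vanishing on the
two last coordinates `e_{k+1}, e_{k+2}`. If `v ∈ I_{1,k}` has `v·v = 1` with orthogonal
complement `Λ` in `I_{1,k}`, then the orthogonal complement of `2v − e_{k+1} − e_{k+2}`
in `I_{1,k+2}` is isomorphic, as a lattice, to `Λ ⊕ ⟨−2⟩ ⊕ ⟨−1⟩`. -/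
theorem stmt7 (k : ℕ) (i1 i2 : Fin (k + 3)) (hi1 : (i1 : ℕ) = k + 1) (hi2 : (i2 : ℕ) = k + 2)
    (v : Fin (k + 3) → ℤ) (hv1 : v i1 = 0) (hv2 : v i2 = 0)
    (hvv : bilin (k + 3) v v = 1)
    (Λ : Submodule ℤ (Fin (k + 3) → ℤ))
    (hΛ : Λ = perp (k + 3) v ⊓
      LinearMap.ker (LinearMap.proj (R := ℤ) (φ := fun _ : Fin (k + 3) => ℤ) i1) ⊓
      LinearMap.ker (LinearMap.proj (R := ℤ) (φ := fun _ : Fin (k + 3) => ℤ) i2)) :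
    ∃ f : (perp (k + 3) (2 • v - Pi.single i1 1 - Pi.single i2 1)) ≃ₗ[ℤ] (Λ × ℤ × ℤ),
      ∀ x y : (perp (k + 3) (2 • v - Pi.single i1 1 - Pi.single i2 1)),
        bilin (k + 3) (x : Fin (k + 3) → ℤ) (y : Fin (k + 3) → ℤ)
          = bilin (k + 3) ((f x).1 : Fin (k + 3) → ℤ) ((f y).1 : Fin (k + 3) → ℤ)
            + (-2) * ((f x).2.1 * (f y).2.1)
            + (-1) * ((f x).2.2 * (f y).2.2) := by
  subst hΛ
  rw [← lorentzForm_apply] at hvv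
  obtain ⟨f, hf⟩ := exists_equiv_perp_two_smul_sub_single_sub_single (by omega) (by omega)
    (Fin.ne_of_val_ne (by omega)) hv1 hv2 hvv
  exact ⟨f, fun x y => by simpa only [lorentzForm_apply] using hf x y⟩
end

section
/- In the lattice I_{1,2} with orthogonal basis h, e₁, e₂ (h² = 1, eᵢ² = −1), the orthogonal complement of the vector v = 3h − e₁ − e₂ (which satisfies v·v = 7) is spanned by h − 2e₁ − e₂ and e₁ − e₂, and is isomorphic to the negative of the linear plumbing lattice Λ(2,4), i.e., the rank-2 lattice with Gram matrix [[−2, 1], [1, −4]]. -/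
open BigOperators Matrix

theorem bilin_three_apply (x y : Fin 3 → ℤ) :
    bilin 3 x y = x 0 * y 0 - x 1 * y 1 - x 2 * y 2 := by
  simp only [bilin, hypMat, mulVec_diagonal, dotProduct, Fin.sum_univ_three, Fin.isValue,
    Fin.coe_ofNat_eq_mod, Nat.zero_mod, Nat.one_mod, Nat.mod_succ, ↓reduceIte, one_ne_zero,
    OfNat.ofNat_ne_zero]
  ring

theorem mem_perp_three_iff (v x : Fin 3 → ℤ) :
    x ∈ perp 3 v ↔ v 0 * x 0 - v 1 * x 1 - v 2 * x 2 = 0 := by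
  rw [← bilin_three_apply]
  rfl

/-- Only the third coordinate needs the hypothesis: it is forced by `3 x₀ + x₁ + x₂ = 0`. -/
theorem eq_smul_add_smul_of_mem_perp {x : Fin 3 → ℤ} (hx : x ∈ perp 3 ![3, -1, -1]) :
    x 0 • ![1, -2, -1] + (x 1 + 2 * x 0) • ![0, 1, -1] = x := by
  rw [mem_perp_three_iff] at hx
  simp only [Fin.isValue, cons_val_zero, cons_val_one, cons_val_two, Nat.succ_eq_add_one,
    Nat.reduceAdd, tail_cons, head_cons] at hx
  funext i
  fin_cases i <;> simp <;> omega

theorem perp_three_eq_span :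
    perp 3 ![3, -1, -1] = Submodule.span ℤ {![1, -2, -1], ![0, 1, -1]} := by
  apply le_antisymm
  · intro x hx
    exact Submodule.mem_span_pair.2 ⟨_, _, eq_smul_add_smul_of_mem_perp hx⟩
  · rw [Submodule.span_le, Set.insert_subset_iff, Set.singleton_subset_iff]
    constructor <;> · rw [SetLike.mem_coe, mem_perp_three_iff]; decide

/-- In `I_{1,2}`, the orthogonal complement of `v = 3h − e₁ − e₂`
(which has `v·v = 7`) is spanned by `h − 2e₁ − e₂` and `e₁ − e₂`, and is isomorphic to
`−Λ(2,4)`: the two spanning vectors have squares `−4` and `−2` and pairing `1`. -/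
theorem stmt9 (v g₁ g₂ : Fin 3 → ℤ)
    (hv : v = ![3, -1, -1]) (hg₁ : g₁ = ![1, -2, -1]) (hg₂ : g₂ = ![0, 1, -1]) :
    bilin 3 v v = 7 ∧
    perp 3 v = Submodule.span ℤ {g₁, g₂} ∧
    bilin 3 g₂ g₂ = -2 ∧ bilin 3 g₂ g₁ = 1 ∧ bilin 3 g₁ g₂ = 1 ∧ bilin 3 g₁ g₁ = -4 := by
  subst hv hg₁ hg₂
  exact ⟨by decide, perp_three_eq_span, by decide, by decide, by decide, by decide⟩
end

section
/- Let Γ₁₂ be the lattice in ℝ¹² generated by D₁₂ and (1/2,…,1/2). The vector ξ = (2,0,0,…,0) ∈ Γ₁₂ is characteristic for Γ₁₂ (i.e., ξ·x ≡ x·x mod 2 for all x ∈ Γ₁₂), and has minimal square among characteristic vectors of Γ₁₂; consequently δ(Γ₁₂) := rk(Γ₁₂) − min{|ξ'·ξ'| : ξ' characteristic} = 12 − 4 = 8. -/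
open BigOperators

/-- The Euclidean inner product on `Fin n → ℚ`. -/
def ip (n : ℕ) (x y : Fin n → ℚ) : ℚ := ∑ i, x i * y i

/-- The set of integer vectors with even coordinate sum (the lattice `Dₙ`). -/
def Dset (n : ℕ) : Set (Fin n → ℚ) :=
  {x | ∃ y : Fin n → ℤ, (∀ i, x i = y i) ∧ Even (∑ i, y i)}

/-- `Γ₁₂`: the lattice generated by `D₁₂` together with `(1/2, …, 1/2)`. -/
noncomputable def Gamma12 : Submodule ℤ (Fin 12 → ℚ) :=
  Submodule.span ℤ (Dset 12 ∪ {fun _ => 1/2})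

def IsCharGamma (ξ : Fin 12 → ℚ) : Prop :=
  ξ ∈ Gamma12 ∧ ∀ x ∈ Gamma12, ∃ m : ℤ, ip 12 ξ x - ip 12 x x = 2 * m

/-- Superset lattice description: `x = y + (k/2)·(1,…,1)` with `∑ y` even. -/
def Lmod : Submodule ℤ (Fin 12 → ℚ) where
  carrier := {x | ∃ (y : Fin 12 → ℤ) (k : ℤ), (∀ i, x i = y i + k/2) ∧ Even (∑ i, y i)}
  add_mem' := by
    rintro a b ⟨y, k, hy, hs⟩ ⟨y', k', hy', hs'⟩
    refine ⟨y + y', k + k', fun i => ?_, ?_⟩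
    · simp only [Pi.add_apply, hy i, hy' i]; push_cast; ring
    · simpa [Finset.sum_add_distrib] using hs.add hs'
  zero_mem' := ⟨0, 0, by simp, by simp⟩
  smul_mem' := by
    rintro c a ⟨y, k, hy, hs⟩
    refine ⟨c • y, c * k, fun i => ?_, ?_⟩
    · simp only [Pi.smul_apply, hy i, smul_eq_mul, zsmul_eq_mul]; push_cast; ring
    · simpa [Finset.mul_sum] using hs.mul_left c

lemma gamma_le_L : Gamma12 ≤ Lmod := by
  rw [Gamma12, Submodule.span_le]
  rintro x (⟨y, hy, hs⟩ | hx)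
  · exact ⟨y, 0, fun i => by simp [hy i], hs⟩
  · refine ⟨0, 1, fun i => ?_, by simp⟩
    simp only [Set.mem_singleton_iff] at hx
    simp [hx]

lemma half_mem : (fun _ => (1/2 : ℚ)) ∈ Gamma12 :=
  Submodule.subset_span (Or.inr rfl)

lemma pair_mem (i j : Fin 12) (_hij : i ≠ j) :
    (fun l => (if l = i then (1:ℚ) else 0) + (if l = j then 1 else 0)) ∈ Gamma12 := by
  refine Submodule.subset_span (Or.inl ⟨fun l => (if l = i then 1 else 0) + (if l = j then 1 else 0), fun l => by push_cast; ring, ?_⟩)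
  have : (∑ l, ((if l = i then (1:ℤ) else 0) + (if l = j then 1 else 0))) = 2 := by
    rw [Finset.sum_add_distrib]
    simp
  rw [this]; exact ⟨1, rfl⟩

lemma ip_pair (ξ : Fin 12 → ℚ) (i j : Fin 12) :
    ip 12 ξ (fun l => (if l = i then (1:ℚ) else 0) + (if l = j then 1 else 0)) = ξ i + ξ j := by
  simp [ip, mul_add, Finset.sum_add_distrib, mul_ite]

lemma ip_pair_pair (i j : Fin 12) (hij : i ≠ j) :
    ip 12 (fun l => (if l = i then (1:ℚ) else 0) + (if l = j then 1 else 0))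
      (fun l => (if l = i then (1:ℚ) else 0) + (if l = j then 1 else 0)) = 2 := by
  rw [ip_pair]
  simp [hij, Ne.symm hij]
  norm_num

lemma ip_half (ξ : Fin 12 → ℚ) : ip 12 ξ (fun _ => (1/2:ℚ)) = (∑ i, ξ i)/2 := by
  simp [ip, div_eq_mul_inv, Finset.sum_mul]

lemma ip_half_half : ip 12 (fun _ => (1/2:ℚ)) (fun _ => (1/2:ℚ)) = 3 := by
  simp [ip]
  norm_num

lemma ip_xi (ξ x : Fin 12 → ℚ) (hξ : ξ = fun i => if i = 0 then 2 else 0) :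
    ip 12 ξ x = 2 * x 0 := by
  simp [ip, hξ, ite_mul]

lemma ip_self (x : Fin 12 → ℚ) (y : Fin 12 → ℤ) (k : ℤ) (hy : ∀ i, x i = y i + k/2) :
    ip 12 x x = (∑ i, y i * y i : ℤ) + k * (∑ i, y i : ℤ) + 3 * (k:ℚ)^2 := by
  have : ∀ i : Fin 12, x i * x i = (y i : ℚ) * y i + k * y i + (k:ℚ)^2/4 := by
    intro i; rw [hy i]; ring
  rw [ip, Finset.sum_congr rfl fun i _ => this i]
  rw [Finset.sum_add_distrib, Finset.sum_add_distrib, ← Finset.mul_sum, Finset.sum_const]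
  push_cast
  simp
  ring

lemma even_QS (y : Fin 12 → ℤ) : Even ((∑ i, y i * y i) - ∑ i, y i) := by
  rw [← Finset.sum_sub_distrib]
  refine Finset.even_sum _ fun i _ => ?_
  have : y i * y i - y i = (y i - 1) * ((y i - 1) + 1) := by ring
  rw [this]; exact Int.even_mul_succ_self _

/-- The vector `ξ = (2,0,…,0)` is a characteristic vector of `Γ₁₂` of
minimal square among characteristic vectors, with `ξ·ξ = 4`; consequently
`δ(Γ₁₂) = 12 − 4 = 8`. -/
theorem stmt15 (ξ : Fin 12 → ℚ) (hξ : ξ = fun i => if i = 0 then 2 else 0) :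
    IsCharGamma ξ ∧ ip 12 ξ ξ = 4 ∧
    (∀ ξ' : Fin 12 → ℚ, IsCharGamma ξ' → ip 12 ξ ξ ≤ ip 12 ξ' ξ') ∧
    (12 : ℚ) - ip 12 ξ ξ = 8 := by
  have hξξ : ip 12 ξ ξ = 4 := by
    rw [ip_xi ξ ξ hξ, hξ]; norm_num
  refine ⟨⟨?_, ?_⟩, hξξ, ?_, by rw [hξξ]; norm_num⟩
  · -- ξ ∈ Gamma12
    refine Submodule.subset_span (Or.inl ⟨fun i => if i = 0 then 2 else 0, fun i => by rw [hξ]; push_cast; simp, ?_⟩)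
    simp
  · -- characteristic
    intro x hx
    obtain ⟨y, k, hy, hs⟩ := gamma_le_L hx
    set Q : ℤ := ∑ i, y i * y i with hQ
    set S : ℤ := ∑ i, y i with hS
    have hQe : Even Q := by
      have := (even_QS y).add hs
      simpa [hQ, hS] using this
    obtain ⟨q, hq⟩ := hQe
    obtain ⟨s, hs2⟩ := hs
    have hke : Even (k - 3 * k^2) := by
      rcases Int.even_or_odd k with ⟨t, ht⟩ | ⟨t, ht⟩
      · exact ⟨t - 6*t^2, by subst ht; ring⟩
      · exact ⟨-6*t^2 - 5*t - 1, by subst ht; ring⟩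
    obtain ⟨e, he⟩ := hke
    refine ⟨y 0 + e - q - k * s, ?_⟩
    rw [ip_xi ξ x hξ, ip_self x y k hy, hy 0]
    have hZ : 2 * (y 0 + (k:ℚ)/2) - ((Q:ℚ) + k * S + 3 * (k:ℚ)^2) = 2 * ((y 0 + e - q - k * s : ℤ) : ℚ) := by
      have hq' : (Q:ℚ) = q + q := by exact_mod_cast congrArg (Int.cast : ℤ → ℚ) hq
      have hs' : (S:ℚ) = s + s := by exact_mod_cast congrArg (Int.cast : ℤ → ℚ) hs2
      have he' : (k:ℚ) - 3 * (k:ℚ)^2 = e + e := by exact_mod_cast congrArg (Int.cast : ℤ → ℚ) he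
      push_cast
      rw [hq', hs']
      linear_combination he'
    convert hZ using 2
  · -- minimality
    rintro ξ' ⟨hmem, hchar⟩
    obtain ⟨y, k, hy, hs⟩ := gamma_le_L hmem
    -- pair conditions
    have hpair : ∀ i j : Fin 12, i ≠ j → Even (y i + y j + k) := by
      intro i j hij
      obtain ⟨m, hm⟩ := hchar _ (pair_mem i j hij)
      rw [ip_pair, ip_pair_pair i j hij, hy i, hy j] at hm
      have : ((y i + y j + k - 2 : ℤ) : ℚ) = ((2 * m : ℤ) : ℚ) := by push_cast; linarith [hm]
      have h2 : y i + y j + k - 2 = 2 * m := by exact_mod_cast this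
      exact ⟨m + 1, by omega⟩
    have hk : Even k := by
      obtain ⟨a, ha⟩ := hpair 0 1 (by decide)
      obtain ⟨b, hb⟩ := hpair 0 2 (by decide)
      obtain ⟨c, hc⟩ := hpair 1 2 (by decide)
      exact ⟨a + b + c - (y 0 + y 1 + y 2 + k), by omega⟩
    obtain ⟨t, ht⟩ := hk
    set z : Fin 12 → ℤ := fun i => y i + t with hz
    have hyz : ∀ i, ξ' i = (z i : ℚ) := by
      intro i; rw [hy i, hz]; push_cast; rw [ht]; push_cast; ring
    have hzpar : ∀ i : Fin 12, i ≠ 0 → Even (z i + z 0) := by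
      intro i hi
      obtain ⟨m, hm⟩ := hpair i 0 hi
      refine ⟨m, ?_⟩
      have h1 : z i = y i + t := rfl
      have h2 : z 0 = y 0 + t := rfl
      rw [h1, h2]
      omega
    -- half condition
    have hhalf : ∃ m : ℤ, ∑ i, z i = 4 * m + 6 := by
      obtain ⟨m, hm⟩ := hchar _ half_mem
      rw [ip_half, ip_half_half] at hm
      have hsum : (∑ i, ξ' i) = ((∑ i, z i : ℤ) : ℚ) := by
        push_cast
        exact Finset.sum_congr rfl fun i _ => hyz i
      rw [hsum] at hm
      refine ⟨m, ?_⟩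
      have : ((∑ i, z i : ℤ) : ℚ) = 4 * (m:ℚ) + 6 := by linarith [hm]
      exact_mod_cast this
    obtain ⟨m, hσ⟩ := hhalf
    -- ip ξ' ξ' as integer sum
    have hipz : ip 12 ξ' ξ' = ((∑ i, z i * z i : ℤ) : ℚ) := by
      rw [ip]
      push_cast
      exact Finset.sum_congr rfl fun i _ => by rw [hyz i]
    rw [hξξ, hipz]
    have key : (4 : ℤ) ≤ ∑ i, z i * z i := by
      rcases Int.even_or_odd (z 0) with h0 | h0
      · -- all even; some nonzero
        have hne : ∃ i, z i ≠ 0 := by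
          by_contra h
          push_neg at h
          rw [Finset.sum_congr rfl fun i _ => h i] at hσ
          simp at hσ
          omega
        obtain ⟨i, hi⟩ := hne
        have hie : Even (z i) := by
          rcases eq_or_ne i 0 with rfl | hi0
          · exact h0
          · obtain ⟨u, hu⟩ := hzpar i hi0
            obtain ⟨v, hv⟩ := h0
            exact ⟨u - v, by omega⟩
        obtain ⟨u, hu⟩ := hie
        have hu0 : u ≠ 0 := by intro h; apply hi; omega
        have h4 : 4 ≤ z i * z i := by
          have : 1 ≤ u * u := by simpa using Int.add_one_le_iff.mpr (mul_self_pos.mpr hu0)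
          calc (4:ℤ) = 4 * 1 := by ring
          _ ≤ 4 * (u * u) := by linarith
          _ = z i * z i := by rw [hu]; ring
        calc (4:ℤ) ≤ z i * z i := h4
        _ ≤ ∑ j, z j * z j :=
          Finset.single_le_sum (fun j _ => mul_self_nonneg (z j)) (Finset.mem_univ i)
      · -- all odd
        have hodd : ∀ i : Fin 12, Odd (z i) := by
          intro i
          rcases eq_or_ne i 0 with rfl | hi0
          · exact h0
          · obtain ⟨u, hu⟩ := hzpar i hi0
            obtain ⟨v, hv⟩ := h0
            exact ⟨u - v - 1, by omega⟩
        have : ∀ i : Fin 12, 1 ≤ z i * z i := by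
          intro i
          have := mul_self_pos.mpr (show z i ≠ 0 by rcases hodd i with ⟨v, hv⟩; omega)
          simpa using Int.add_one_le_iff.mpr this
        calc (4:ℤ) ≤ 12 := by norm_num
        _ = ∑ _i : Fin 12, (1:ℤ) := by simp
        _ ≤ ∑ i, z i * z i := Finset.sum_le_sum fun i _ => this i
    exact_mod_cast key
end
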